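/- Let σ_{0,n} = {0,…,0} denote the origin with multiplicity n (so that g agrees with f on σ_{0,n} means f − g ∈ z^n·Hol(D)). Then c(σ_{0,n}, H², H^∞) ≥ (1/2)√n for all n ≥ 2. -/

import Mathlib

open Complex Metric ComplexConjugate

noncomputable section

/-- Predicate: `f` is holomorphic on the unit disc. -/
def HolOn (f : ℂ → ℂ) : Prop := AnalyticOn ℂ f (Metric.ball 0 1)

/-- `k`-th Taylor coefficient of `f` at the origin. -/
def coef (f : ℂ → ℂ) (k : ℕ) : ℂ := iteratedDeriv k f 0 / (Nat.factorial k)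

/-- Hardy space `H²` norm via Taylor coefficients. -/
def H2norm (f : ℂ → ℂ) : ℝ := Real.sqrt (∑' k : ℕ, ‖coef f k‖ ^ 2)

def MemH2 (f : ℂ → ℂ) : Prop := HolOn f ∧ Summable (fun k : ℕ => ‖coef f k‖ ^ 2)

def Hinfnorm (f : ℂ → ℂ) : ℝ := sSup ((fun z => ‖f z‖) '' Metric.ball (0:ℂ) 1)

def MemHinf (f : ℂ → ℂ) : Prop := HolOn f ∧ BddAbove ((fun z => ‖f z‖) '' Metric.ball (0:ℂ) 1)

/-- Elementary Blaschke factor. -/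
def blaschke (l z : ℂ) : ℂ := (l - z) / (1 - conj l * z)

def BlaschkeProd {n : ℕ} (l : Fin n → ℂ) (z : ℂ) : ℂ := ∏ i, blaschke (l i) z

/-- `g` agrees with `f` on the finite sequence `l` (with multiplicities). -/
def AgreeOn {n : ℕ} (l : Fin n → ℂ) (f g : ℂ → ℂ) : Prop :=
  ∃ h : ℂ → ℂ, HolOn h ∧ ∀ z ∈ Metric.ball (0:ℂ) 1, f z - g z = BlaschkeProd l z * h z

/-- Interpolation constant `c(σ, H², H^∞)`. -/
def cH2Hinf {n : ℕ} (l : Fin n → ℂ) : ℝ :=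
  sSup { c | ∃ f, MemH2 f ∧ H2norm f ≤ 1 ∧
    c = sInf { m | ∃ g, MemHinf g ∧ Hinfnorm g = m ∧ AgreeOn l f g } }

/-- `C_{n,r}(H², H^∞)`. -/
def CnrH2Hinf (n : ℕ) (r : ℝ) : ℝ :=
  sSup { c | ∃ m, m ≤ n ∧ ∃ l : Fin m → ℂ, (∀ i, ‖l i‖ ≤ r) ∧ c = cH2Hinf l }

/-- Cauchy sesquilinear pairing. -/
def cauchyPairing (f g : ℂ → ℂ) : ℂ := ∑' k : ℕ, coef f k * conj (coef g k)

/-- Membership in the model space `K_B = H² ⊖ B H²`. -/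
def MemKB {n : ℕ} (l : Fin n → ℂ) (g : ℂ → ℂ) : Prop :=
  MemH2 g ∧ ∀ h, MemH2 h → cauchyPairing g (fun z => BlaschkeProd l z * h z) = 0

/-
Test against `f = n^{-1/2} (1 + z + ⋯ + z^{n-1})`, which has `H²` norm one. Let `g ∈ H^∞` share
the first `n` Taylor coefficients of `f`. For `r < 1`, average `g(rζ)` over the unit circle against
the nonnegative weight `|1 + ζ + ⋯ + ζ^{n-1}|²` (`n` times the Fejér kernel), whose mean is `n`.
Expanding the weight as `∑_{j,k<n} ζ^k ζ̄^j`, the Cauchy formulas kill the terms with `k > j` and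
turn the others into Taylor coefficients, so the average is `∑_{m<n} (n - m) r^m ĝ(m)`, of modulus
at most `n ‖g‖_∞`. Letting `r → 1` gives `n (n + 1) / (2√n) ≤ n ‖g‖_∞`, hence `‖g‖_∞ ≥ √n / 2`.
The supremum is finite because, by Cauchy–Schwarz, the degree-`n` truncation of any `f ∈ H²` is
an admissible `g` with `‖g‖_∞ ≤ √n ‖f‖_{H²}`.
-/

open Finset Real

lemma coef_sum_mul_pow (c : ℕ → ℂ) (N m : ℕ) :
    coef (fun z ↦ ∑ k ∈ range N, c k * z ^ k) m = if m < N then c m else 0 := by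
  rw [coef, iteratedDeriv_fun_sum fun k _ ↦ by fun_prop]
  simp only [iteratedDeriv_const_mul_field, iteratedDeriv_fun_pow_zero, Nat.cast_ite,
    Nat.cast_zero, mul_ite, mul_zero, sum_ite_eq, mem_range]
  split_ifs <;> simp [Nat.factorial_ne_zero]

lemma coef_const_one (m : ℕ) : coef (fun _ ↦ 1) m = if m = 0 then 1 else 0 := by
  rcases m with _ | m <;> simp [coef, iteratedDeriv_const]

lemma sum_range_sum_range_ite_sub {M : Type*} [AddCommMonoid M] (F : ℕ → M) (n : ℕ) :
    ∑ j ∈ range n, ∑ k ∈ range n, (if k ≤ j then F (j - k) else 0)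
      = ∑ m ∈ range n, (n - m) • F m := by
  have inner : ∀ j ∈ range n,
      ∑ k ∈ range n, (if k ≤ j then F (j - k) else 0) = ∑ m ∈ range (j + 1), F m := by
    intro j hj
    have : (range n).filter (· ≤ j) = range (j + 1) := by
      ext k; simp only [mem_filter, mem_range] at hj ⊢; omega
    rw [← sum_filter, this, ← sum_range_reflect F]
    simp
  rw [sum_congr rfl inner]
  simp only [range_eq_Ico]
  rw [← sum_Ico_Ico_comm]
  simp

lemma cast_sum_range_sub (n : ℕ) : ((∑ m ∈ range n, (n - m) : ℕ) : ℝ) = n * (n + 1) / 2 := by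
  have hshift : ∑ m ∈ range n, (n - m) = ∑ i ∈ range (n + 1), i := by
    rw [sum_range_succ', ← sum_range_reflect]
    simp only [add_zero]
    exact sum_congr rfl fun m hm ↦ by simp at hm; omega
  have hgauss : (∑ m ∈ range n, (n - m)) * 2 = n * (n + 1) := by
    rw [hshift, sum_range_id_mul_two, Nat.add_sub_cancel, mul_comm]
  rw [eq_div_iff two_ne_zero]
  exact_mod_cast hgauss

lemma norm_circleAverage_le {E : Type*} [NormedAddCommGroup E] [NormedSpace ℝ E]
    (f : ℂ → E) (c : ℂ) (R : ℝ) :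
    ‖circleAverage f c R‖ ≤ circleAverage (fun z ↦ ‖f z‖) c R := by
  rw [circleAverage, circleAverage, norm_smul, smul_eq_mul, Real.norm_of_nonneg (by positivity)]
  gcongr
  exact intervalIntegral.norm_integral_le_integral_norm two_pi_pos.le

lemma conj_div_of_mem_sphere {R : ℝ} (hR : 0 < R) {z : ℂ} (hz : z ∈ sphere (0 : ℂ) |R|) :
    conj (z / R) = R / z := by
  have hnorm : ‖z‖ = R := by simpa [abs_of_pos hR] using hz
  have hz0 : z ≠ 0 := norm_pos_iff.mp (hnorm ▸ hR)
  have hR0 : (R : ℂ) ≠ 0 := by exact_mod_cast hR.ne'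
  rw [map_div₀, Complex.conj_ofReal]
  field_simp
  have hmul := Complex.mul_conj' z
  rw [hnorm] at hmul
  linear_combination hmul

section CauchyMoments

variable {g : ℂ → ℂ} {R : ℝ}

lemma circleAverage_div_pow (hg : DifferentiableOn ℂ g (closedBall 0 R)) (hR : 0 < R) (m : ℕ) :
    circleAverage (fun z ↦ g z / z ^ m) 0 R = coef g m := by
  have hcauchy := hg.circleIntegral_one_div_sub_center_pow_smul hR m
  rw [circleAverage_eq_circleIntegral hR.ne', coef]
  simp only [sub_zero, smul_eq_mul] at hcauchy ⊢
  have : (fun z ↦ z⁻¹ * (g z / z ^ m)) = fun z ↦ 1 / z ^ (m + 1) * g z := by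
    funext z; ring
  rw [this, hcauchy]
  field_simp [two_pi_I_ne_zero, Nat.factorial_ne_zero]

lemma circleAverage_pow_succ_mul (hg : DifferentiableOn ℂ g (closedBall 0 R)) (hR : 0 < R)
    (m : ℕ) : circleAverage (fun z ↦ z ^ (m + 1) * g z) 0 R = 0 := by
  have hd : DifferentiableOn ℂ (fun z ↦ z ^ (m + 1) * g z) (closure (ball 0 |R|)) := by
    rw [abs_of_pos hR]
    exact ((differentiable_pow _).differentiableOn.mul hg).mono closure_ball_subset_closedBall
  simp [hd.diffContOnCl.circleAverage]

lemma circleAverage_pow_mul_conj_pow_mul (hg : DifferentiableOn ℂ g (closedBall 0 R)) (hR : 0 < R)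
    (k j : ℕ) :
    circleAverage (fun z ↦ (z / R) ^ k * conj (z / R) ^ j * g z) 0 R
      = if k ≤ j then R ^ (j - k) * coef g (j - k) else 0 := by
  have hR0 : (R : ℂ) ≠ 0 := by exact_mod_cast hR.ne'
  split_ifs with hkj
  · obtain ⟨d, rfl⟩ := Nat.exists_eq_add_of_le hkj
    calc _ = circleAverage (fun z ↦ (R : ℂ) ^ d • (g z / z ^ d)) 0 R := by
          refine circleAverage_congr_sphere fun z hz ↦ ?_
          have hz0 : z ≠ 0 := ne_of_mem_sphere hz (abs_pos.2 hR.ne').ne'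
          rw [conj_div_of_mem_sphere hR hz, smul_eq_mul, div_pow, div_pow]
          field_simp
          ring
      _ = _ := by rw [circleAverage_fun_smul, circleAverage_div_pow hg hR, smul_eq_mul]; simp
  · obtain ⟨d, rfl⟩ := Nat.exists_eq_add_of_lt (not_le.mp hkj)
    calc _ = circleAverage (fun z ↦ ((R : ℂ) ^ (d + 1))⁻¹ • (z ^ (d + 1) * g z)) 0 R := by
          refine circleAverage_congr_sphere fun z hz ↦ ?_
          have hz0 : z ≠ 0 := ne_of_mem_sphere hz (abs_pos.2 hR.ne').ne'
          rw [conj_div_of_mem_sphere hR hz, smul_eq_mul, div_pow, div_pow]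
          field_simp
          ring
      _ = 0 := by rw [circleAverage_fun_smul, circleAverage_pow_succ_mul hg hR, smul_zero]

lemma circleAverage_ofReal_norm_geom_sum_sq_mul (hg : DifferentiableOn ℂ g (closedBall 0 R))
    (hR : 0 < R) (n : ℕ) :
    circleAverage (fun z ↦ ((‖∑ k ∈ range n, (z / R) ^ k‖ ^ 2 : ℝ) : ℂ) * g z) 0 R
      = ∑ m ∈ range n, (n - m) • (R ^ m * coef g m) := by
  have hgc : ContinuousOn g (sphere 0 R) := hg.continuousOn.mono sphere_subset_closedBall
  have expand : (fun z : ℂ ↦ ((‖∑ k ∈ range n, (z / R) ^ k‖ ^ 2 : ℝ) : ℂ) * g z)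
      = fun z : ℂ ↦ ∑ j ∈ range n, ∑ k ∈ range n, (z / R) ^ k * conj (z / R) ^ j * g z := by
    funext z
    rw [Complex.ofReal_pow, ← Complex.mul_conj', map_sum, sum_mul_sum, sum_comm, sum_mul]
    simp_rw [sum_mul, map_pow]
  rw [expand, circleAverage_fun_sum fun j _ ↦ ContinuousOn.circleIntegrable hR.le (by fun_prop)]
  have inner (j : ℕ) :
      circleAverage (fun z : ℂ ↦ ∑ k ∈ range n, (z / R) ^ k * conj (z / R) ^ j * g z) 0 R
        = ∑ k ∈ range n, if k ≤ j then R ^ (j - k) * coef g (j - k) else 0 := by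
    rw [circleAverage_fun_sum fun k _ ↦ ContinuousOn.circleIntegrable hR.le (by fun_prop)]
    simp only [circleAverage_pow_mul_conj_pow_mul hg hR]
  simp only [inner]
  exact sum_range_sum_range_ite_sub (fun m ↦ (R : ℂ) ^ m * coef g m) n

lemma norm_sum_nsmul_pow_mul_coef_le {M : ℝ} (hg : DifferentiableOn ℂ g (closedBall 0 R))
    (hR : 0 < R) (hM : ∀ z ∈ sphere (0 : ℂ) R, ‖g z‖ ≤ M) (n : ℕ) :
    ‖∑ m ∈ range n, (n - m) • ((R : ℂ) ^ m * coef g m)‖ ≤ n * M := by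
  set w : ℂ → ℝ := fun z ↦ ‖∑ k ∈ range n, (z / R) ^ k‖ ^ 2 with hw
  have hwc : Continuous w := by fun_prop
  have hgc : ContinuousOn g (sphere 0 R) := hg.continuousOn.mono sphere_subset_closedBall
  have hmean : circleAverage w 0 R = n := by
    have h := circleAverage_ofReal_norm_geom_sum_sq_mul (differentiableOn_const 1) hR n
    simp only [mul_one, coef_const_one] at h
    rw [← Complex.ofReal_inj, ← Complex.ofRealCLM_apply,
      ← ContinuousLinearMap.circleAverage_comp_comm _ (hwc.continuousOn.circleIntegrable hR.le)]
    have hn : (if 0 < n then (n : ℂ) else 0) = n :=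
      ite_eq_left_iff.2 fun h0 ↦ by simp [Nat.eq_zero_of_not_pos h0]
    simpa [Function.comp_def, hn, hw] using h
  calc _ = ‖circleAverage (fun z ↦ (w z : ℂ) * g z) 0 R‖ := by
        rw [circleAverage_ofReal_norm_geom_sum_sq_mul hg hR]
    _ ≤ circleAverage (fun z ↦ ‖(w z : ℂ) * g z‖) 0 R := norm_circleAverage_le _ _ _
    _ ≤ circleAverage (fun z ↦ M • w z) 0 R := by
        refine circleAverage_mono (ContinuousOn.circleIntegrable hR.le (by fun_prop))
          ((hwc.const_smul M).continuousOn.circleIntegrable hR.le) fun z hz ↦ ?_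
        rw [abs_of_pos hR] at hz
        rw [norm_mul, Complex.norm_real, Real.norm_of_nonneg (by positivity), smul_eq_mul,
          mul_comm M]
        exact mul_le_mul_of_nonneg_left (hM z hz) (by positivity)
    _ = n * M := by rw [circleAverage_fun_smul, hmean, smul_eq_mul, mul_comm]

end CauchyMoments

open Filter Topology in
theorem norm_sum_nsmul_coef_le {g : ℂ → ℂ} {M : ℝ} (hg : DifferentiableOn ℂ g (ball 0 1))
    (hM : ∀ z ∈ ball (0 : ℂ) 1, ‖g z‖ ≤ M) (n : ℕ) :
    ‖∑ m ∈ range n, (n - m) • coef g m‖ ≤ n * M := by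
  set φ : ℝ → ℝ := fun r ↦ ‖∑ m ∈ range n, (n - m) • ((r : ℂ) ^ m * coef g m)‖
  have hle : ∀ r ∈ Set.Ioo (0 : ℝ) 1, φ r ≤ n * M := fun r hr ↦
    norm_sum_nsmul_pow_mul_coef_le (hg.mono (closedBall_subset_ball hr.2)) hr.1
      (fun z hz ↦ hM z (closedBall_subset_ball hr.2 (sphere_subset_closedBall hz))) n
  have hlim : Tendsto φ (𝓝[<] 1) (𝓝 (φ 1)) :=
    ((show Continuous φ by fun_prop).tendsto 1).mono_left nhdsWithin_le_nhds
  simpa [φ] using le_of_tendsto hlim (eventually_of_mem (Ioo_mem_nhdsLT one_pos) hle)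

lemma holOn_sum_mul_pow (c : ℕ → ℂ) (N : ℕ) : HolOn fun z ↦ ∑ k ∈ range N, c k * z ^ k :=
  ((show Differentiable ℂ _ by fun_prop).differentiableOn.analyticOnNhd isOpen_ball).analyticOn

lemma memH2_sum_mul_pow (c : ℕ → ℂ) (N : ℕ) : MemH2 fun z ↦ ∑ k ∈ range N, c k * z ^ k :=
  ⟨holOn_sum_mul_pow c N, summable_of_ne_finset_zero (s := range N) fun m hm ↦ by
    simp [coef_sum_mul_pow, mem_range.not.mp hm]⟩

lemma H2norm_sum_mul_pow (c : ℕ → ℂ) (N : ℕ) :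
    H2norm (fun z ↦ ∑ k ∈ range N, c k * z ^ k) = √(∑ k ∈ range N, ‖c k‖ ^ 2) := by
  rw [H2norm, tsum_eq_sum (s := range N) fun m hm ↦ by
    simp [coef_sum_mul_pow, mem_range.not.mp hm]]
  congr 1
  exact sum_congr rfl fun k hk ↦ by simp [coef_sum_mul_pow, mem_range.mp hk]

lemma Hinfnorm_nonneg {g : ℂ → ℂ} (hg : MemHinf g) : 0 ≤ Hinfnorm g :=
  (norm_nonneg _).trans (le_csSup hg.2 ⟨0, mem_ball_self one_pos, rfl⟩)

lemma norm_le_Hinfnorm {g : ℂ → ℂ} (hg : MemHinf g) {z : ℂ} (hz : z ∈ ball (0 : ℂ) 1) :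
    ‖g z‖ ≤ Hinfnorm g :=
  le_csSup hg.2 ⟨z, hz, rfl⟩

lemma Hinfnorm_le {g : ℂ → ℂ} {C : ℝ} (h : ∀ z ∈ ball (0 : ℂ) 1, ‖g z‖ ≤ C) : Hinfnorm g ≤ C :=
  csSup_le ⟨_, 0, mem_ball_self one_pos, rfl⟩ (by rintro _ ⟨z, hz, rfl⟩; exact h z hz)

lemma norm_sum_coef_mul_pow_le {f : ℂ → ℂ} (hf : MemH2 f) (n : ℕ) {z : ℂ}
    (hz : z ∈ ball (0 : ℂ) 1) :
    ‖∑ k ∈ range n, coef f k * z ^ k‖ ≤ √n * H2norm f := by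
  have hz1 : ‖z‖ ≤ 1 := (mem_ball_zero_iff.mp hz).le
  calc ‖∑ k ∈ range n, coef f k * z ^ k‖ ≤ ∑ k ∈ range n, ‖coef f k‖ := by
        refine (norm_sum_le _ _).trans (sum_le_sum fun k _ ↦ ?_)
        rw [norm_mul, norm_pow]
        exact mul_le_of_le_one_right (norm_nonneg _) (pow_le_one₀ (norm_nonneg _) hz1)
    _ ≤ √(n * ∑ k ∈ range n, ‖coef f k‖ ^ 2) := by
        refine Real.le_sqrt_of_sq_le ?_
        simpa using sq_sum_le_card_mul_sum_sq (s := range n) (f := fun k ↦ ‖coef f k‖)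
    _ ≤ √n * H2norm f := by
        rw [Real.sqrt_mul (Nat.cast_nonneg n), H2norm]
        gcongr
        exact hf.2.sum_le_tsum _ fun k _ ↦ sq_nonneg _

def interpNorms (n : ℕ) (f : ℂ → ℂ) : Set ℝ :=
  { m | ∃ g, MemHinf g ∧ Hinfnorm g = m ∧ ∀ k < n, coef g k = coef f k }

lemma bddBelow_interpNorms (n : ℕ) (f : ℂ → ℂ) : BddBelow (interpNorms n f) :=
  ⟨0, by rintro _ ⟨g, hg, rfl, -⟩; exact Hinfnorm_nonneg hg⟩

lemma exists_mem_interpNorms_le {f : ℂ → ℂ} (hf : MemH2 f) (n : ℕ) :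
    ∃ m ∈ interpNorms n f, m ≤ √n * H2norm f := by
  set T : ℂ → ℂ := fun z ↦ ∑ k ∈ range n, coef f k * z ^ k
  have hT : ∀ z ∈ ball (0 : ℂ) 1, ‖T z‖ ≤ √n * H2norm f :=
    fun z hz ↦ norm_sum_coef_mul_pow_le hf n hz
  exact ⟨Hinfnorm T, ⟨T, ⟨holOn_sum_mul_pow _ n, ⟨_, by rintro _ ⟨z, hz, rfl⟩; exact hT z hz⟩⟩,
    rfl, fun k hk ↦ by simp [T, coef_sum_mul_pow, hk]⟩, Hinfnorm_le hT⟩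

lemma sInf_interpNorms_le {f : ℂ → ℂ} (hf : MemH2 f) (n : ℕ) :
    sInf (interpNorms n f) ≤ √n * H2norm f :=
  let ⟨_, hm, hle⟩ := exists_mem_interpNorms_le hf n
  (csInf_le (bddBelow_interpNorms n f) hm).trans hle

lemma sqrt_div_two_le_of_mul_le {n : ℕ} {M : ℝ} (hM : 0 ≤ M)
    (h : n * (n + 1) / 2 * (√n)⁻¹ ≤ n * M) : √n / 2 ≤ M := by
  rcases n.eq_zero_or_pos with rfl | hn
  · simpa using hM
  have hn' : (0 : ℝ) < n := by exact_mod_cast hn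
  have hq0 : 0 < √(n : ℝ) := Real.sqrt_pos.2 hn'
  have hqq : √(n : ℝ) * √n = n := Real.mul_self_sqrt hn'.le
  have h2 : (n : ℝ) * (n + 1) ≤ n * (2 * M * √n) := by
    have := mul_le_mul_of_nonneg_right h (by positivity : (0 : ℝ) ≤ 2 * √n)
    rw [show n * (n + 1) / 2 * (√n)⁻¹ * (2 * √(n : ℝ)) = n * (n + 1) by field_simp] at this
    linarith
  have h3 : √(n : ℝ) * √n ≤ 2 * M * √n := by linarith [le_of_mul_le_mul_left h2 hn']
  linarith [le_of_mul_le_mul_right h3 hq0]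

lemma sqrt_div_two_le_sInf_interpNorms (n : ℕ) :
    √n / 2 ≤ sInf (interpNorms n fun z ↦ ∑ k ∈ range n, ((√n)⁻¹ : ℝ) * z ^ k) := by
  obtain ⟨m₀, hm₀, -⟩ := exists_mem_interpNorms_le (memH2_sum_mul_pow (fun _ ↦ ((√n)⁻¹ : ℝ)) n) n
  refine le_csInf ⟨m₀, hm₀⟩ ?_
  rintro _ ⟨g, hg, rfl, hgf⟩
  have hsum : ∑ m ∈ range n, (n - m) • coef g m = ((n * (n + 1) / 2 * (√n)⁻¹ : ℝ) : ℂ) := by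
    rw [sum_congr rfl fun m hm ↦ by rw [hgf m (mem_range.mp hm), coef_sum_mul_pow,
      if_pos (mem_range.mp hm)], ← sum_smul, nsmul_eq_mul, ← cast_sum_range_sub]
    push_cast
    rfl
  have hfejer := norm_sum_nsmul_coef_le hg.1.differentiableOn (fun z hz ↦ norm_le_Hinfnorm hg hz) n
  rw [hsum, Complex.norm_real, Real.norm_of_nonneg (by positivity)] at hfejer
  exact sqrt_div_two_le_of_mul_le (Hinfnorm_nonneg hg) hfejer

theorem c_caratheodory_schur_origin_lower_general (n : ℕ) :
    (1 / 2) * Real.sqrt (n : ℝ) ≤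
      sSup { c | ∃ f, MemH2 f ∧ H2norm f ≤ 1 ∧
        c = sInf { m | ∃ g, MemHinf g ∧ Hinfnorm g = m ∧
              ∀ k < n, coef g k = coef f k } } := by
  have hbdd : BddAbove { c | ∃ f, MemH2 f ∧ H2norm f ≤ 1 ∧ c = sInf (interpNorms n f) } := by
    refine ⟨√n, ?_⟩
    rintro _ ⟨f, hf, hf1, rfl⟩
    exact (sInf_interpNorms_le hf n).trans (mul_le_of_le_one_right (Real.sqrt_nonneg _) hf1)
  have htest : H2norm (fun z ↦ ∑ k ∈ range n, ((√n)⁻¹ : ℝ) * z ^ k) ≤ 1 := by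
    rw [H2norm_sum_mul_pow, Real.sqrt_le_one]
    simpa [Complex.norm_real, inv_pow, Real.sq_sqrt] using mul_inv_le_one
  refine le_csSup_of_le hbdd ⟨_, memH2_sum_mul_pow _ n, htest, rfl⟩ ?_
  rw [one_div_mul_eq_div]
  exact sqrt_div_two_le_sInf_interpNorms n

/-- Carathéodory–Schur interpolation at the origin with multiplicity `n`:
`c(σ_{0,n}, H², H^∞) ≥ (1/2)√n` for `n ≥ 2`.  Agreement on `σ_{0,n}`
means coincidence of the first `n` Taylor coefficients. -/
theorem c_caratheodory_schur_origin_lower (n : ℕ) (hn : 2 ≤ n) :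
    (1 / 2) * Real.sqrt (n : ℝ) ≤
      sSup { c | ∃ f, MemH2 f ∧ H2norm f ≤ 1 ∧
        c = sInf { m | ∃ g, MemHinf g ∧ Hinfnorm g = m ∧
              ∀ k < n, coef g k = coef f k } } :=
  c_caratheodory_schur_origin_lower_general n
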